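/- arXiv:2207.08921 — 2 statements merged into one kernel-verified Lean document; each statement's English description precedes it below -/
import Mathlib

section
/- Let φ be a holomorphic self-map of 𝔻 such that C_φ : H^∞(𝔻) → 𝓑(𝔻) is an isometry, and suppose φ(0) = 0. Then applying C_φ to f(z) = z² gives ‖φ²‖_𝓑 = sup_{z∈𝔻} 2(1-|z|²)|φ(z)||φ'(z)| ≤ 4/(3√3), contradicting ‖f‖_∞ = 1; hence no such φ with φ(0)=0 exists. -/
open Metric Filter

/-- The open unit disk in ℂ. -/
noncomputable def unitDisk : Set ℂ := Metric.ball 0 1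

/-- Supremum norm over the unit disk. -/
noncomputable def supNorm (f : ℂ → ℂ) : ℝ :=
  sSup ((fun z => ‖f z‖) '' unitDisk)

/-- Bloch seminorm over the unit disk. -/
noncomputable def blochSemi (g : ℂ → ℂ) : ℝ :=
  sSup ((fun z => (1 - ‖z‖ ^ 2) * ‖deriv g z‖) '' unitDisk)

/-- Bloch norm over the unit disk. -/
noncomputable def blochNorm (g : ℂ → ℂ) : ℝ :=
  ‖g 0‖ + blochSemi g

/-!
Testing the isometry on `f z = z ^ 2` gives `‖φ ^ 2‖_𝓑 = ‖f‖_∞ = 1`, where `φ 0 = 0` kills the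
point-evaluation term. By Schwarz–Pick, `(1 - |z|²) |(φ²)'(z)| ≤ 2t(1 - t²)` with `t = |φ z|`,
and `2t(1 - t²) ≤ 4 / (3√3) < 1`. Schwarz–Pick itself is the Schwarz lemma for `φ` conjugated
by the involutions `w ↦ (a - w) / (1 - ā w)` of the disk.
-/

open Set ComplexConjugate

lemma mem_unitDisk {z : ℂ} : z ∈ unitDisk ↔ ‖z‖ < 1 := mem_ball_zero_iff

namespace Complex

noncomputable def mobius (a w : ℂ) : ℂ := (a - w) / (1 - conj a * w)

theorem mobius_zero (a : ℂ) : mobius a 0 = a := by simp [mobius]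

theorem mobius_self (a : ℂ) : mobius a a = 0 := by simp [mobius]

theorem one_sub_conj_mul_ne_zero {a w : ℂ} (ha : ‖a‖ < 1) (hw : ‖w‖ < 1) :
    1 - conj a * w ≠ 0 := by
  have : ‖conj a * w‖ < 1 := by
    rw [norm_mul, norm_conj]
    exact mul_lt_one_of_nonneg_of_lt_one_left (norm_nonneg a) ha hw.le
  exact sub_ne_zero.2 fun h => this.ne (by rw [← h, norm_one])

theorem normSq_one_sub_conj_mul_sub_normSq_sub (a w : ℂ) :
    normSq (1 - conj a * w) - normSq (a - w) = (1 - normSq a) * (1 - normSq w) := by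
  simp only [normSq_apply, sub_re, sub_im, mul_re, mul_im, one_re, one_im, conj_re, conj_im]
  ring

theorem norm_mobius_lt_one {a w : ℂ} (ha : ‖a‖ < 1) (hw : ‖w‖ < 1) : ‖mobius a w‖ < 1 := by
  rw [mobius, norm_div, div_lt_one (norm_pos_iff.2 (one_sub_conj_mul_ne_zero ha hw)),
    ← sq_lt_sq₀ (norm_nonneg _) (norm_nonneg _), Complex.sq_norm, Complex.sq_norm]
  have ha2 : normSq a < 1 := Complex.sq_norm a ▸ pow_lt_one₀ (norm_nonneg a) ha two_ne_zero
  have hw2 : normSq w < 1 := Complex.sq_norm w ▸ pow_lt_one₀ (norm_nonneg w) hw two_ne_zero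
  nlinarith [normSq_one_sub_conj_mul_sub_normSq_sub a w]

theorem mapsTo_mobius {a : ℂ} (ha : ‖a‖ < 1) : MapsTo (mobius a) unitDisk unitDisk :=
  fun _ hw => mem_unitDisk.2 (norm_mobius_lt_one ha (mem_unitDisk.1 hw))

theorem hasDerivAt_mobius {a w : ℂ} (h : 1 - conj a * w ≠ 0) :
    HasDerivAt (mobius a) ((normSq a - 1) / (1 - conj a * w) ^ 2) w := by
  have hnum : HasDerivAt (fun w => a - w) (-1) w := (hasDerivAt_id w).const_sub a
  have hden : HasDerivAt (fun w => 1 - conj a * w) (-conj a) w := by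
    simpa using ((hasDerivAt_id w).const_mul (conj a)).const_sub 1
  refine (hnum.div hden h).congr_deriv ?_
  rw [normSq_eq_conj_mul_self]
  ring

theorem differentiableOn_mobius {a : ℂ} (ha : ‖a‖ < 1) :
    DifferentiableOn ℂ (mobius a) unitDisk := fun _ hw =>
  (hasDerivAt_mobius (one_sub_conj_mul_ne_zero ha (mem_unitDisk.1 hw))).differentiableAt
    |>.differentiableWithinAt

theorem hasDerivAt_mobius_zero (a : ℂ) :
    HasDerivAt (mobius a) (-((1 - ‖a‖ ^ 2 : ℝ) : ℂ)) 0 := by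
  refine (hasDerivAt_mobius (a := a) (w := 0) (by simp)).congr_deriv ?_
  rw [normSq_eq_norm_sq]
  push_cast
  ring

theorem hasDerivAt_mobius_self {a : ℂ} (ha : ‖a‖ < 1) :
    HasDerivAt (mobius a) (-((1 - ‖a‖ ^ 2 : ℝ) : ℂ)⁻¹) a := by
  have hne : 1 - conj a * a ≠ 0 := one_sub_conj_mul_ne_zero ha ha
  refine (hasDerivAt_mobius hne).congr_deriv ?_
  rw [← normSq_eq_conj_mul_self, normSq_eq_norm_sq] at hne ⊢
  push_cast at hne ⊢
  field_simp
  ring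

end Complex

open Complex

theorem schwarz_pick {φ : ℂ → ℂ} (hφ : DifferentiableOn ℂ φ unitDisk)
    (hφm : MapsTo φ unitDisk unitDisk) {z : ℂ} (hz : z ∈ unitDisk) :
    (1 - ‖z‖ ^ 2) * ‖deriv φ z‖ ≤ 1 - ‖φ z‖ ^ 2 := by
  set b := φ z
  have hb : ‖b‖ < 1 := mem_unitDisk.1 (hφm hz)
  have hz' : ‖z‖ < 1 := mem_unitDisk.1 hz
  set ψ := mobius b ∘ φ ∘ mobius z
  have hψ : DifferentiableOn ℂ ψ unitDisk :=
    (differentiableOn_mobius hb).comp (hφ.comp (differentiableOn_mobius hz') (mapsTo_mobius hz'))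
      (hφm.comp (mapsTo_mobius hz'))
  have hψm : MapsTo ψ unitDisk unitDisk := (mapsTo_mobius hb).comp (hφm.comp (mapsTo_mobius hz'))
  have hψ0 : ψ 0 = 0 := by simp [ψ, b, mobius_zero, mobius_self]
  have hψ' : HasDerivAt ψ
      (-((1 - ‖b‖ ^ 2 : ℝ) : ℂ)⁻¹ * (deriv φ z * -((1 - ‖z‖ ^ 2 : ℝ) : ℂ))) 0 := by
    have hφ' : HasDerivAt φ (deriv φ z) (mobius z 0) := by
      rw [mobius_zero]
      exact (hφ.differentiableAt (isOpen_ball.mem_nhds hz)).hasDerivAt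
    have hb' : HasDerivAt (mobius b) (-((1 - ‖b‖ ^ 2 : ℝ) : ℂ)⁻¹) ((φ ∘ mobius z) 0) := by
      simpa [mobius_zero] using hasDerivAt_mobius_self hb
    exact hb'.comp 0 (hφ'.comp 0 (hasDerivAt_mobius_zero z))
  have hschwarz : ‖deriv ψ 0‖ ≤ 1 :=
    norm_deriv_le_one_of_mapsTo_ball hψ (by rw [hψ0]; exact hψm.mono_right ball_subset_closedBall)
      one_pos
  have hb2 : 0 < 1 - ‖b‖ ^ 2 := sub_pos.2 (pow_lt_one₀ (norm_nonneg b) hb two_ne_zero)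
  have hz2 : 0 ≤ 1 - ‖z‖ ^ 2 := sub_nonneg.2 (pow_le_one₀ (norm_nonneg z) hz'.le)
  rw [hψ'.deriv, norm_mul, norm_mul, norm_neg, norm_neg, norm_inv, norm_real, norm_real,
    Real.norm_of_nonneg hb2.le, Real.norm_of_nonneg hz2, inv_mul_le_iff₀ hb2, mul_one] at hschwarz
  linarith

theorem two_mul_mul_one_sub_sq_le {t : ℝ} (ht : 0 ≤ t) : 2 * t * (1 - t ^ 2) ≤ 4 / (3 * √3) := by
  have hs : √3 ^ 2 = 3 := Real.sq_sqrt (by norm_num)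
  have hfactor : 4 - 2 * t * (1 - t ^ 2) * (3 * √3) = 2 * (√3 * t - 1) ^ 2 * (√3 * t + 2) := by
    linear_combination (-2 * √3 * t ^ 3) * hs
  have : 0 ≤ 2 * (√3 * t - 1) ^ 2 * (√3 * t + 2) := by positivity
  rw [le_div_iff₀ (by positivity)]
  linarith

theorem four_div_three_mul_sqrt_three_lt_one : 4 / (3 * √3) < 1 := by
  rw [div_lt_one (by positivity)]
  nlinarith [Real.sq_sqrt (show (0 : ℝ) ≤ 3 by norm_num), Real.sqrt_nonneg 3]

theorem blochSemi_sq_le {φ : ℂ → ℂ} (hφ : DifferentiableOn ℂ φ unitDisk)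
    (hφm : MapsTo φ unitDisk unitDisk) : blochSemi (fun z => φ z ^ 2) ≤ 4 / (3 * √3) := by
  refine Real.sSup_le ?_ (by positivity)
  rintro _ ⟨z, hz, rfl⟩
  have hφ' : HasDerivAt φ (deriv φ z) z :=
    (hφ.differentiableAt (isOpen_ball.mem_nhds hz)).hasDerivAt
  calc (1 - ‖z‖ ^ 2) * ‖deriv (fun z => φ z ^ 2) z‖
      = 2 * ‖φ z‖ * ((1 - ‖z‖ ^ 2) * ‖deriv φ z‖) := by
        rw [(hφ'.fun_pow 2).deriv, norm_mul, norm_mul, Nat.cast_ofNat, Complex.norm_two, pow_one]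
        ring
    _ ≤ 2 * ‖φ z‖ * (1 - ‖φ z‖ ^ 2) := by gcongr; exact schwarz_pick hφ hφm hz
    _ ≤ 4 / (3 * √3) := two_mul_mul_one_sub_sq_le (norm_nonneg _)

theorem image_norm_sq_unitDisk : (fun z : ℂ => ‖z ^ 2‖) '' unitDisk = Ico 0 1 := by
  ext x
  constructor
  · rintro ⟨z, hz, rfl⟩
    simp only [norm_pow]
    exact ⟨by positivity, pow_lt_one₀ (norm_nonneg z) (mem_unitDisk.1 hz) two_ne_zero⟩
  · rintro ⟨hx0, hx1⟩
    have hsqrt : ‖((√x : ℝ) : ℂ)‖ = √x := by rw [norm_real, Real.norm_of_nonneg (Real.sqrt_nonneg x)]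
    refine ⟨√x, mem_unitDisk.2 ?_, ?_⟩
    · rw [hsqrt, Real.sqrt_lt' one_pos, one_pow]
      exact hx1
    · simp only [norm_pow, hsqrt, Real.sq_sqrt hx0]

theorem supNorm_sq : supNorm (fun z => z ^ 2) = 1 := by
  rw [supNorm, image_norm_sq_unitDisk, csSup_Ico zero_lt_one]

theorem stmt_9 (φ : ℂ → ℂ) (hφ : DifferentiableOn ℂ φ unitDisk)
    (hφm : Set.MapsTo φ unitDisk unitDisk) (h0 : φ 0 = 0)
    (hiso : ∀ f : ℂ → ℂ, DifferentiableOn ℂ f unitDisk →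
      BddAbove ((fun z => ‖f z‖) '' unitDisk) →
      blochNorm (f ∘ φ) = supNorm f) :
    False := by
  have hbdd : BddAbove ((fun z : ℂ => ‖z ^ 2‖) '' unitDisk) :=
    image_norm_sq_unitDisk ▸ bddAbove_Ico
  have hnorm : blochNorm ((fun z => z ^ 2) ∘ φ) = 1 :=
    supNorm_sq ▸ hiso _ (differentiable_pow 2).differentiableOn hbdd
  have hbloch : blochNorm ((fun z => z ^ 2) ∘ φ) = blochSemi (fun z => φ z ^ 2) := by
    simp [blochNorm, h0, Function.comp_def]
  linarith [blochSemi_sq_le hφ hφm, four_div_three_mul_sqrt_three_lt_one]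
end

section
/- There is no pair (ψ, φ) with ψ holomorphic and bounded on 𝔻 and φ a holomorphic self-map of 𝔻 such that W_{ψ,φ} g = ψ·(g∘φ) is an isometry from the Bloch space 𝓑(𝔻) into H^∞(𝔻), provided W_{ψ,φ} is bounded, i.e., sup_{z∈𝔻}|ψ(z)| log(2/(1-|φ(z)|)) < ∞. (One-dimensional case, n = 1, of the polydisk theorem.) -/
open Metric Filter

/-!
Testing the isometry on `g = 1` and `g = id` gives `sup |ψ| = 1` and `sup |ψ φ| = 1`.
The bound `|ψ| log (2 / (1 - |φ|)) ≤ M` forces `|ψ| ≤ 1/2` wherever `|φ|` is close to `1`,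
so `|ψ φ|` stays below a constant `c < 1` on the whole disk, a contradiction.
-/

lemma mul_le_max_of_mul_log_le {a r M : ℝ} (hM : 0 < M) (ha₀ : 0 ≤ a) (ha₁ : a ≤ 1)
    (hr₁ : r < 1) (h : a * Real.log (2 / (1 - r)) ≤ M) :
    a * r ≤ max (1 / 2) (1 - 2 * Real.exp (-(2 * M))) := by
  by_cases hr : r ≤ 1 - 2 * Real.exp (-(2 * M))
  · by_cases hr₀ : 0 ≤ r
    · exact le_max_of_le_right ((mul_le_of_le_one_left hr₀ ha₁).trans hr)
    · exact le_max_of_le_left (by nlinarith)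
  · have hlog : 2 * M < Real.log (2 / (1 - r)) := by
      rw [Real.lt_log_iff_exp_lt (by apply div_pos <;> linarith), lt_div_iff₀ (by linarith)]
      have : Real.exp (2 * M) * Real.exp (-(2 * M)) = 1 := by
        rw [← Real.exp_add, add_neg_cancel, Real.exp_zero]
      nlinarith [Real.exp_pos (2 * M)]
    have ha : a ≤ 1 / 2 := by nlinarith
    exact le_max_of_le_left (by nlinarith)

lemma zero_mem_unitDisk : (0 : ℂ) ∈ unitDisk := by simp [unitDisk]

lemma unitDisk_nonempty : unitDisk.Nonempty := ⟨0, zero_mem_unitDisk⟩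

lemma norm_le_supNorm {f : ℂ → ℂ} (hf : BddAbove ((fun z => ‖f z‖) '' unitDisk)) {z : ℂ}
    (hz : z ∈ unitDisk) : ‖f z‖ ≤ supNorm f :=
  le_csSup hf ⟨z, hz, rfl⟩

lemma supNorm_le {f : ℂ → ℂ} {c : ℝ} (h : ∀ z ∈ unitDisk, ‖f z‖ ≤ c) : supNorm f ≤ c :=
  csSup_le (unitDisk_nonempty.image _) (by rintro _ ⟨z, hz, rfl⟩; exact h z hz)

section ConstantDerivative

variable {g : ℂ → ℂ} {c : ℂ}

lemma one_sub_sq_norm_mul_norm_le (z : ℂ) : (1 - ‖z‖ ^ 2) * ‖c‖ ≤ ‖c‖ := by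
  nlinarith [norm_nonneg c, sq_nonneg ‖z‖]

lemma bddAbove_bloch_of_deriv_eq (h : ∀ z, deriv g z = c) :
    BddAbove ((fun z => (1 - ‖z‖ ^ 2) * ‖deriv g z‖) '' unitDisk) :=
  ⟨‖c‖, by rintro _ ⟨z, -, rfl⟩; simpa only [h] using one_sub_sq_norm_mul_norm_le z⟩

lemma blochSemi_of_deriv_eq (h : ∀ z, deriv g z = c) : blochSemi g = ‖c‖ :=
  le_antisymm
    (csSup_le (unitDisk_nonempty.image _)
      (by rintro _ ⟨z, -, rfl⟩; simpa only [h] using one_sub_sq_norm_mul_norm_le z))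
    (le_csSup (bddAbove_bloch_of_deriv_eq h) ⟨0, zero_mem_unitDisk, by simp [h]⟩)

end ConstantDerivative

lemma blochNorm_one : blochNorm (fun _ => (1 : ℂ)) = 1 := by
  simp [blochNorm, blochSemi_of_deriv_eq (fun z => deriv_const z (1 : ℂ))]

lemma blochNorm_id : blochNorm (fun z => z) = 1 := by
  simp [blochNorm, blochSemi_of_deriv_eq (congrFun deriv_id'')]

theorem stmt_19 :
    ¬ ∃ (ψ φ : ℂ → ℂ), DifferentiableOn ℂ ψ unitDisk ∧
      BddAbove ((fun z => ‖ψ z‖) '' unitDisk) ∧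
      DifferentiableOn ℂ φ unitDisk ∧ Set.MapsTo φ unitDisk unitDisk ∧
      BddAbove ((fun z => ‖ψ z‖ * Real.log (2 / (1 - ‖φ z‖))) ''
        unitDisk) ∧
      ∀ g : ℂ → ℂ, DifferentiableOn ℂ g unitDisk →
        BddAbove ((fun z => (1 - ‖z‖ ^ 2) * ‖deriv g z‖) '' unitDisk) →
        supNorm (fun z => ψ z * g (φ z)) = blochNorm g := by
  rintro ⟨ψ, φ, -, hψ, -, hφ, hlog, hiso⟩
  have hsupψ : supNorm ψ = 1 := by
    simpa [blochNorm_one] using hiso _ (differentiableOn_const 1)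
      (bddAbove_bloch_of_deriv_eq fun z => deriv_const z (1 : ℂ))
  have hsupψφ : supNorm (fun z => ψ z * φ z) = 1 :=
    (hiso _ differentiableOn_id (bddAbove_bloch_of_deriv_eq (congrFun deriv_id''))).trans
      blochNorm_id
  obtain ⟨M, hM₁, hM⟩ := hlog.exists_ge 1
  set c := max (1 / 2) (1 - 2 * Real.exp (-(2 * M)))
  have hc : c < 1 := max_lt (by norm_num) (by linarith [Real.exp_pos (-(2 * M))])
  have hle : supNorm (fun z => ψ z * φ z) ≤ c := by
    refine supNorm_le fun z hz => ?_
    rw [norm_mul]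
    exact mul_le_max_of_mul_log_le (by linarith) (norm_nonneg _)
      (hsupψ ▸ norm_le_supNorm hψ hz) (by simpa [unitDisk] using hφ hz) (hM _ ⟨z, hz, rfl⟩)
  linarith
end
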